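/- Let V be a nonzero finite-dimensional ℤ-graded complex vector space with zero differential. The isomorphism HH_0(End(V)) ≅ ℂ realized by the supertrace sends the class of every Hochschild 0-cycle lying in End(V)^{⊗k} (i.e., of tensor length k and total degree k−1) to 0, for every k ≥ 2. -/

import Mathlib

open scoped TensorProduct DirectSum
open PiTensorProduct

noncomputable section

namespace FLS

/-! ### Tensor powers and the total Hochschild/bar chain space -/

/-- The `k`-th tensor power of `A` over `ℂ`. -/
abbrev TPow (A : Type) [AddCommGroup A] [Module ℂ A] (k : ℕ) : Type :=
  PiTensorProduct ℂ (fun _ : Fin k => A)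

/-- The underlying graded vector space `⊕_{k ≥ 1} A^{⊗ k}` of the Hochschild (equivalently bar)
chain complex of `A`.  (A spurious summand `A^{⊗0} ≅ ℂ` is present at index `0`; it is never
touched by any of the span submodules or formulas below, which only involve lengths `≥ 1`.) -/
abbrev Chains (A : Type) [AddCommGroup A] [Module ℂ A] : Type :=
  ⨁ k : ℕ, TPow A k

/-- Inclusion of the length-`k` tensors in the chain space. -/
def inc (A : Type) [AddCommGroup A] [Module ℂ A] (k : ℕ) :
    TPow A k →ₗ[ℂ] Chains A :=
  DirectSum.lof ℂ ℕ (fun k => TPow A k) k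

/-! ### Index and sign bookkeeping -/

/-- partial sum `d 0 + ⋯ + d (t-1)` of a tuple of degrees. -/
def psum {m : ℕ} (d : Fin m → ℤ) (t : ℕ) : ℤ :=
  ∑ i : Fin m, if (i : ℕ) < t then d i else 0

/-- `a_0 ⊗ ⋯ ⊗ a_i a_{i+1} ⊗ ⋯ ⊗ a_{k+1}` : multiply the `i`-th and `(i+1)`-st entries. -/
def mulAt {A : Type} [Mul A] {k : ℕ} (a : Fin (k + 2) → A) (i : Fin (k + 1)) :
    Fin (k + 1) → A :=
  fun j =>
    if (j : ℕ) < (i : ℕ) then a (Fin.castSucc j)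
    else if (j : ℕ) = (i : ℕ) then a (Fin.castSucc j) * a (Fin.succ j)
    else a (Fin.succ j)

/-- `a_{k+1} a_0 ⊗ a_1 ⊗ ⋯ ⊗ a_k` : the cyclic multiplication term. -/
def cycMul {A : Type} [Mul A] {k : ℕ} (a : Fin (k + 2) → A) : Fin (k + 1) → A :=
  fun j =>
    if (j : ℕ) = 0 then a (Fin.last (k + 1)) * a (Fin.castSucc j)
    else a (Fin.castSucc j)

/-- Cyclic rotation `(a_0, …, a_n) ↦ (a_n, a_0, …, a_{n-1})`. -/
def rot {α : Type} {n : ℕ} (f : Fin (n + 1) → α) : Fin (n + 1) → α :=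
  fun t => f (t - 1)

/-- Iterated cyclic rotation. -/
def rotIter {α : Type} {n : ℕ} : ℕ → (Fin (n + 1) → α) → (Fin (n + 1) → α)
  | 0, f => f
  | (t + 1), f => rot (rotIter t f)

/-- The sign `(-1)^{(d_n+1)(d_0+⋯+d_{n-1}+n)}` of the signed cyclic operator `τ` on a tensor
whose entries are homogeneous of degrees `d_0, …, d_n` (length `n+1`). -/
def tauSign {n : ℕ} (d : Fin (n + 1) → ℤ) : ℂ :=
  (-1 : ℂ) ^ ((d (Fin.last n) + 1) * (psum d n + (n : ℤ)))

/-- The sign of `τ^j` on a tensor with homogeneous entries of degrees `d`. -/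
def tauSignPow (j : ℕ) {n : ℕ} (d : Fin (n + 1) → ℤ) : ℂ :=
  ∏ t ∈ Finset.range j, tauSign (rotIter t d)

/-! ### Hochschild chains of a given cohomological degree -/

/-- The subspace of `Chains A` spanned by simple tensors of length `k+1` (some `k ≥ 0`) with
homogeneous entries whose degrees sum to `n + k`, i.e. the homogeneous chains of cohomological
degree `n` in the Hochschild (or bar) complex `⊕_{k ≥ 1} (A[1])^{⊗k}[-1]`. -/
def chainsDeg (A : Type) [AddCommGroup A] [Module ℂ A] (𝒜 : ℤ → Submodule ℂ A) (n : ℤ) :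
    Submodule ℂ (Chains A) :=
  Submodule.span ℂ
    {x | ∃ (k : ℕ) (d : Fin (k + 1) → ℤ) (a : Fin (k + 1) → A),
      (∀ i, a i ∈ 𝒜 (d i)) ∧ (∑ i, d i) = n + k ∧
      x = inc A (k + 1) (tprod ℂ a)}

/-- The subspace of `Chains A` spanned by simple tensors of length exactly `k` with homogeneous
entries whose degrees sum to `n`. -/
def pureChains (A : Type) [AddCommGroup A] [Module ℂ A] (𝒜 : ℤ → Submodule ℂ A)
    (k : ℕ) (n : ℤ) : Submodule ℂ (Chains A) :=
  Submodule.span ℂ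
    {x | ∃ (d : Fin k → ℤ) (a : Fin k → A),
      (∀ i, a i ∈ 𝒜 (d i)) ∧ (∑ i, d i) = n ∧ x = inc A k (tprod ℂ a)}

/-! ### The Hochschild and bar differentials, characterized by their defining formulas -/

/-- `D` is the Hochschild differential of the dg-algebra `(A, 𝒜, δ)`: it is linear and is given
on simple tensors with homogeneous entries by the standard formula (on length-1 tensors only the
internal differential `δ` contributes). -/
def IsHochschildDifferential (A : Type) [Ring A] [Algebra ℂ A] (𝒜 : ℤ → Submodule ℂ A)
    (δ : A →ₗ[ℂ] A) (D : Chains A →ₗ[ℂ] Chains A) : Prop :=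
  (∀ a : A, D (inc A 1 (tprod ℂ (fun _ => a))) = inc A 1 (tprod ℂ (fun _ => δ a))) ∧
  (∀ (k : ℕ) (d : Fin (k + 2) → ℤ) (a : Fin (k + 2) → A), (∀ i, a i ∈ 𝒜 (d i)) →
    D (inc A (k + 2) (tprod ℂ a)) =
      (∑ i : Fin (k + 1),
        ((-1 : ℂ) ^ (psum d ((i : ℕ) + 1) + ((i : ℕ) : ℤ) + 1)) •
          inc A (k + 1) (tprod ℂ (mulAt a i)))
      + ((-1 : ℂ) ^ ((d (Fin.last (k + 1)) + 1) * (psum d (k + 1) + (k : ℤ)))) •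
          inc A (k + 1) (tprod ℂ (cycMul a))
      + ∑ j : Fin (k + 2),
          ((-1 : ℂ) ^ (psum d (j : ℕ) + ((j : ℕ) : ℤ))) •
            inc A (k + 2) (tprod ℂ (Function.update a j (δ (a j)))))

/-- `D` is the bar differential of the dg-algebra `(A, 𝒜, δ)`: same formula as the Hochschild
differential, with the cyclic multiplication term omitted. -/
def IsBarDifferential (A : Type) [Ring A] [Algebra ℂ A] (𝒜 : ℤ → Submodule ℂ A)
    (δ : A →ₗ[ℂ] A) (D : Chains A →ₗ[ℂ] Chains A) : Prop :=
  (∀ a : A, D (inc A 1 (tprod ℂ (fun _ => a))) = inc A 1 (tprod ℂ (fun _ => δ a))) ∧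
  (∀ (k : ℕ) (d : Fin (k + 2) → ℤ) (a : Fin (k + 2) → A), (∀ i, a i ∈ 𝒜 (d i)) →
    D (inc A (k + 2) (tprod ℂ a)) =
      (∑ i : Fin (k + 1),
        ((-1 : ℂ) ^ (psum d ((i : ℕ) + 1) + ((i : ℕ) : ℤ) + 1)) •
          inc A (k + 1) (tprod ℂ (mulAt a i)))
      + ∑ j : Fin (k + 2),
          ((-1 : ℂ) ^ (psum d (j : ℕ) + ((j : ℕ) : ℤ))) •
            inc A (k + 2) (tprod ℂ (Function.update a j (δ (a j)))))

/-- `T` is the signed cyclic operator `τ` (acting on each tensor power of `A`). -/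
def IsCyclicOp (A : Type) [AddCommGroup A] [Module ℂ A] (𝒜 : ℤ → Submodule ℂ A)
    (T : Chains A →ₗ[ℂ] Chains A) : Prop :=
  ∀ (k : ℕ) (d : Fin (k + 1) → ℤ) (a : Fin (k + 1) → A), (∀ i, a i ∈ 𝒜 (d i)) →
    T (inc A (k + 1) (tprod ℂ a)) = tauSign d • inc A (k + 1) (tprod ℂ (rot a))

/-- `N` is the norm operator `id + τ + ⋯ + τ^{k-1}` (on tensors of length `k`). -/
def IsNormOp (A : Type) [AddCommGroup A] [Module ℂ A] (𝒜 : ℤ → Submodule ℂ A)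
    (N : Chains A →ₗ[ℂ] Chains A) : Prop :=
  ∀ (k : ℕ) (d : Fin (k + 1) → ℤ) (a : Fin (k + 1) → A), (∀ i, a i ∈ 𝒜 (d i)) →
    N (inc A (k + 1) (tprod ℂ a)) =
      ∑ j ∈ Finset.range (k + 1), tauSignPow j d • inc A (k + 1) (tprod ℂ (rotIter j a))

/-! ### Hochschild homology -/

def cocycles (A : Type) [AddCommGroup A] [Module ℂ A] (𝒜 : ℤ → Submodule ℂ A)
    (D : Chains A →ₗ[ℂ] Chains A) (n : ℤ) : Submodule ℂ (Chains A) :=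
  LinearMap.ker D ⊓ chainsDeg A 𝒜 n

def cobound (A : Type) [AddCommGroup A] [Module ℂ A] (𝒜 : ℤ → Submodule ℂ A)
    (D : Chains A →ₗ[ℂ] Chains A) (n : ℤ) : Submodule ℂ (Chains A) :=
  Submodule.map D (chainsDeg A 𝒜 (n - 1))

/-- The image of the degree-`n` cocycles in `Chains A ⧸ (boundaries)`; this realizes the `n`-th
cohomology of the Hochschild chain complex (i.e. the Hochschild homology `HH_{-n}`) as a
subspace of the quotient of the chain space by the boundaries. -/
def HHsub (A : Type) [AddCommGroup A] [Module ℂ A] (𝒜 : ℤ → Submodule ℂ A)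
    (D : Chains A →ₗ[ℂ] Chains A) (n : ℤ) :
    Submodule ℂ (Chains A ⧸ cobound A 𝒜 D n) :=
  Submodule.map (cobound A 𝒜 D n).mkQ (cocycles A 𝒜 D n)

/-- `HH A 𝒜 D n` : the `n`-th cohomology of the Hochschild chain complex, i.e. the Hochschild
homology `HH_{-n}`. -/
abbrev HH (A : Type) [AddCommGroup A] [Module ℂ A] (𝒜 : ℤ → Submodule ℂ A)
    (D : Chains A →ₗ[ℂ] Chains A) (n : ℤ) : Type :=
  ↥(HHsub A 𝒜 D n)

/-- The class in `HH A 𝒜 D n` of a cocycle. -/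
def hhClass (A : Type) [AddCommGroup A] [Module ℂ A] (𝒜 : ℤ → Submodule ℂ A)
    (D : Chains A →ₗ[ℂ] Chains A) (n : ℤ) (x : Chains A)
    (hx : x ∈ cocycles A 𝒜 D n) : HH A 𝒜 D n :=
  ⟨(cobound A 𝒜 D n).mkQ x, Submodule.mem_map_of_mem hx⟩

/-! ### The graded endomorphism algebra of a graded vector space, and the supertrace -/

/-- The degree-`m` part of `End(V)` for a graded vector space `(M, 𝒱)`. -/
def endGrade (M : Type) [AddCommGroup M] [Module ℂ M] (𝒱 : ℤ → Submodule ℂ M) (m : ℤ) :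
    Submodule ℂ (Module.End ℂ M) where
  carrier := {f | ∀ (i : ℤ), ∀ v ∈ 𝒱 i, f v ∈ 𝒱 (i + m)}
  add_mem' := by
    intro f g hf hg i v hv
    have h := (𝒱 (i + m)).add_mem (hf i v hv) (hg i v hv)
    simpa [LinearMap.add_apply] using h
  zero_mem' := by
    intro i v hv
    simp
  smul_mem' := by
    intro c f hf i v hv
    have h := (𝒱 (i + m)).smul_mem c (hf i v hv)
    simpa [LinearMap.smul_apply] using h

/-- The projection `M → M` onto the `i`-th graded piece `𝒱 i`. -/
def gprojection (M : Type) [AddCommGroup M] [Module ℂ M] (𝒱 : ℤ → Submodule ℂ M)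
    [DirectSum.Decomposition 𝒱] (i : ℤ) : M →ₗ[ℂ] M :=
  (𝒱 i).subtype ∘ₗ (DirectSum.component ℂ ℤ (fun j => ↥(𝒱 j)) i) ∘ₗ
    (DirectSum.decomposeLinearEquiv 𝒱).toLinearMap

/-- The supertrace `str(f) = ∑_i (-1)^i tr(π_i ∘ f ∘ π_i)` of an endomorphism of a graded
vector space. -/
def str (M : Type) [AddCommGroup M] [Module ℂ M] (𝒱 : ℤ → Submodule ℂ M)
    [DirectSum.Decomposition 𝒱] (f : Module.End ℂ M) : ℂ :=
  ∑ᶠ i : ℤ, ((-1 : ℂ) ^ i) *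
    LinearMap.trace ℂ M (gprojection M 𝒱 i ∘ₗ f ∘ₗ gprojection M 𝒱 i)

/-- The supertrace Hochschild `0`-cocycle of `End(V)`, applied to a chain: the supertrace of the
length-one component. -/
def strChain (M : Type) [AddCommGroup M] [Module ℂ M] (𝒱 : ℤ → Submodule ℂ M)
    [DirectSum.Decomposition 𝒱] (x : Chains (Module.End ℂ M)) : ℂ :=
  str M 𝒱 ((PiTensorProduct.subsingletonEquiv (0 : Fin 1))
    ((DirectSum.component ℂ ℕ (fun k => TPow (Module.End ℂ M) k) 1) x))

/-- `e : HH_0(End V) ≃ ℂ` is the supertrace isomorphism: it takes the class of the length-one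
cycle given by a degree-0 endomorphism `f` to `str f`. -/
def IsStrIso (M : Type) [AddCommGroup M] [Module ℂ M] (𝒱 : ℤ → Submodule ℂ M)
    [DirectSum.Decomposition 𝒱]
    (D : Chains (Module.End ℂ M) →ₗ[ℂ] Chains (Module.End ℂ M))
    (e : HH (Module.End ℂ M) (endGrade M 𝒱) D 0 ≃ₗ[ℂ] ℂ) : Prop :=
  ∀ (f : Module.End ℂ M), f ∈ endGrade M 𝒱 0 →
    ∀ (hz : inc (Module.End ℂ M) 1 (tprod ℂ (fun _ => f)) ∈
        cocycles (Module.End ℂ M) (endGrade M 𝒱) D 0),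
      e (hhClass (Module.End ℂ M) (endGrade M 𝒱) D 0 _ hz) = str M 𝒱 f

/-! ### Tsygan's double complex, realized on its total space, and cyclic homology -/

/-- Type synonym for a single column of Tsygan's double complex (this hides the graded
ring structure of the chain space from instance resolution). -/
def CCol (A : Type) [AddCommGroup A] [Module ℂ A] : Type := Chains A

instance (A : Type) [AddCommGroup A] [Module ℂ A] : AddCommGroup (CCol A) :=
  inferInstanceAs (AddCommGroup (Chains A))

instance (A : Type) [AddCommGroup A] [Module ℂ A] : Module ℂ (CCol A) :=
  inferInstanceAs (Module ℂ (Chains A))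

/-- The total space of Tsygan's double complex: the summand of index `m : ℕ` is the column
`p = -m` (whose underlying space is the chain space, for both the Hochschild and the bar
columns). -/
abbrev CycChains (A : Type) [AddCommGroup A] [Module ℂ A] : Type :=
  ⨁ _m : ℕ, CCol A

/-- Inclusion of the column `p = -m` into the total space. -/
def cofm (A : Type) [AddCommGroup A] [Module ℂ A] (m : ℕ) :
    Chains A →ₗ[ℂ] CycChains A :=
  DirectSum.lof ℂ ℕ (fun _ => CCol A) m

/-- The total differential of Tsygan's double complex, built from the Hochschild differential
`DH` (vertical differential on the even columns), the bar differential `Db` (vertical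
differential `-Db` on the odd columns), the norm operator `N` (horizontal differential out of
the even columns) and the cyclic operator `T` (horizontal differential `id - T` out of the odd
columns); column `p = 0` has no horizontal differential. -/
def cyclicDifferential (A : Type) [AddCommGroup A] [Module ℂ A]
    (DH Db T N : Chains A →ₗ[ℂ] Chains A) : CycChains A →ₗ[ℂ] CycChains A :=
  DirectSum.toModule ℂ ℕ (CycChains A) (fun m =>
    (if Even m then cofm A m ∘ₗ DH else cofm A m ∘ₗ (-Db))
    + (if m = 0 then 0
       else if Even m then cofm A (m - 1) ∘ₗ N
       else cofm A (m - 1) ∘ₗ ((LinearMap.id : Chains A →ₗ[ℂ] Chains A) - T)))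

/-- The periodicity map `S : Cycl^• → Cycl^{•+2}`, induced by the projection of Tsygan's double
complex killing the columns `p = 0, -1`. -/
def Smap (A : Type) [AddCommGroup A] [Module ℂ A] : CycChains A →ₗ[ℂ] CycChains A :=
  DirectSum.toModule ℂ ℕ (CycChains A) (fun m =>
    if 2 ≤ m then cofm A (m - 2) else 0)

/-- The inclusion `𝓘` of the Hochschild complex as the column `p = 0` of Tsygan's double
complex. -/
def Imap (A : Type) [AddCommGroup A] [Module ℂ A] : Chains A →ₗ[ℂ] CycChains A :=
  cofm A 0

/-- The homogeneous part of total (cohomological) degree `n` of the total space of Tsygan's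
double complex: it is spanned by tensors of length `k+1` with homogeneous entries of total
degree `(n + m) + k` sitting in the column `p = -m` (so that `p + q = n` where `q = n + m` is
the cohomological chain degree). -/
def cycDeg (A : Type) [AddCommGroup A] [Module ℂ A] (𝒜 : ℤ → Submodule ℂ A) (n : ℤ) :
    Submodule ℂ (CycChains A) :=
  Submodule.span ℂ
    {x | ∃ (m k : ℕ) (d : Fin (k + 1) → ℤ) (a : Fin (k + 1) → A),
      (∀ i, a i ∈ 𝒜 (d i)) ∧ (∑ i, d i) = (n + m) + k ∧
      x = cofm A m (inc A (k + 1) (tprod ℂ a))}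

def cycCocycles (A : Type) [AddCommGroup A] [Module ℂ A] (𝒜 : ℤ → Submodule ℂ A)
    (Dc : CycChains A →ₗ[ℂ] CycChains A) (n : ℤ) : Submodule ℂ (CycChains A) :=
  LinearMap.ker Dc ⊓ cycDeg A 𝒜 n

def cycBound (A : Type) [AddCommGroup A] [Module ℂ A] (𝒜 : ℤ → Submodule ℂ A)
    (Dc : CycChains A →ₗ[ℂ] CycChains A) (n : ℤ) : Submodule ℂ (CycChains A) :=
  Submodule.map Dc (cycDeg A 𝒜 (n - 1))

/-- The degree-`n` cohomology of the cyclic complex (i.e. the cyclic homology `HC_{-n}`),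
realized as the image of the degree-`n` cocycles in the quotient by the boundaries. -/
def HCsub (A : Type) [AddCommGroup A] [Module ℂ A] (𝒜 : ℤ → Submodule ℂ A)
    (Dc : CycChains A →ₗ[ℂ] CycChains A) (n : ℤ) :
    Submodule ℂ (CycChains A ⧸ cycBound A 𝒜 Dc n) :=
  Submodule.map (cycBound A 𝒜 Dc n).mkQ (cycCocycles A 𝒜 Dc n)

/-- `HC A 𝒜 Dc n` : the cyclic homology `HC_{-n}`. -/
abbrev HC (A : Type) [AddCommGroup A] [Module ℂ A] (𝒜 : ℤ → Submodule ℂ A)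
    (Dc : CycChains A →ₗ[ℂ] CycChains A) (n : ℤ) : Type :=
  ↥(HCsub A 𝒜 Dc n)

/-- The class in `HC A 𝒜 Dc n` of a cyclic cocycle. -/
def hcClass (A : Type) [AddCommGroup A] [Module ℂ A] (𝒜 : ℤ → Submodule ℂ A)
    (Dc : CycChains A →ₗ[ℂ] CycChains A) (n : ℤ) (x : CycChains A)
    (hx : x ∈ cycCocycles A 𝒜 Dc n) : HC A 𝒜 Dc n :=
  ⟨(cycBound A 𝒜 Dc n).mkQ x, Submodule.mem_map_of_mem hx⟩

/-- `e : HC_{-2i}(End V) ≃ ℂ` is the canonical trace isomorphism `tr_{2i}` : it takes the class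
of any cyclic cycle given by a tuple `(b_{2i}, …, b_0, b_{-1}, …, b_{-2j})` (with
`b_m ∈ CC^{-2i+m,-m}`, i.e. the component placed in the column of index `col = 2i - m` is a
chain of cohomological degree `col - 2i`) to the supertrace cocycle evaluated on `b_0` (the
component in the column `p = -2i`, of chain degree `0`). -/
def IsTrIso (M : Type) [AddCommGroup M] [Module ℂ M] (𝒱 : ℤ → Submodule ℂ M)
    [DirectSum.Decomposition 𝒱]
    (Dc : CycChains (Module.End ℂ M) →ₗ[ℂ] CycChains (Module.End ℂ M)) (i : ℕ)
    (e : HC (Module.End ℂ M) (endGrade M 𝒱) Dc (-(2 * (i : ℤ))) ≃ₗ[ℂ] ℂ) : Prop :=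
  ∀ (j : ℕ) (c : ℕ → Chains (Module.End ℂ M)),
    (∀ col : ℕ, c col ∈ chainsDeg (Module.End ℂ M) (endGrade M 𝒱) ((col : ℤ) - 2 * i)) →
    ∀ (hx : (∑ col ∈ Finset.range (2 * i + 2 * j + 1), cofm (Module.End ℂ M) col (c col)) ∈
        cycCocycles (Module.End ℂ M) (endGrade M 𝒱) Dc (-(2 * (i : ℤ)))),
      e (hcClass (Module.End ℂ M) (endGrade M 𝒱) Dc (-(2 * (i : ℤ))) _ hx) =
        strChain M 𝒱 (c (2 * i))

/-! ### A∞-morphisms : Taylor components, `F_bar`, `F_Hoch`, `F_cycl` -/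

/-- The axioms of a (unital) differential graded `ℂ`-algebra for the data `(A, 𝒜, δ)`. -/
structure IsDGAlgebra (A : Type) [Ring A] [Algebra ℂ A] (𝒜 : ℤ → Submodule ℂ A)
    (δ : A →ₗ[ℂ] A) : Prop where
  mul_mem : ∀ {i j : ℤ} {a b : A}, a ∈ 𝒜 i → b ∈ 𝒜 j → a * b ∈ 𝒜 (i + j)
  one_mem : (1 : A) ∈ 𝒜 0
  delta_sq : ∀ a : A, δ (δ a) = 0
  delta_mem : ∀ {i : ℤ} {a : A}, a ∈ 𝒜 i → δ a ∈ 𝒜 (i + 1)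
  leibniz : ∀ {i : ℤ} {a : A}, a ∈ 𝒜 i → ∀ b : A,
    δ (a * b) = δ a * b + ((-1 : ℂ) ^ i) • (a * δ b)

/-- The Taylor components `F_k` of an `A∞`-morphism have degree `1 - k` : `F_k` takes a
homogeneous tensor of total degree `n` to an element of degree `n + 1 - k`. -/
def FTaylorDegree (A B : Type) [AddCommGroup A] [Module ℂ A] [AddCommGroup B] [Module ℂ B]
    (𝒜 : ℤ → Submodule ℂ A) (ℬ : ℤ → Submodule ℂ B)
    (F : ∀ k : ℕ, TPow A k →ₗ[ℂ] B) : Prop :=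
  ∀ (k : ℕ) (d : Fin (k + 1) → ℤ) (a : Fin (k + 1) → A), (∀ i, a i ∈ 𝒜 (d i)) →
    F (k + 1) (tprod ℂ a) ∈ ℬ ((∑ i, d i) + 1 - ((k : ℤ) + 1))

/-- `F_{k_1} ⊠ ⋯ ⊠ F_{k_l}` applied to a simple tensor, for the composition `c = (k_1, …, k_l)`
of `n` : apply the Taylor components to the consecutive blocks. -/
def blockTensor (A B : Type) [AddCommGroup A] [Module ℂ A] [AddCommGroup B] [Module ℂ B]
    (F : ∀ k : ℕ, TPow A k →ₗ[ℂ] B) {n : ℕ} (c : Composition n) (a : Fin n → A) :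
    TPow B c.length :=
  tprod ℂ (fun i : Fin c.length =>
    F (c.blocksFun i) (tprod ℂ (fun j : Fin (c.blocksFun i) => a (c.embedding i j))))

/-- The cyclic predecessor of an index in `Fin m`. -/
def prevIdx {m : ℕ} (i : Fin m) : Fin m :=
  ⟨((i : ℕ) + (m - 1)) % m, Nat.mod_lt _ i.pos⟩

open Fin.NatCast in
/-- `F_{k_l} ⊠ F_{k_1} ⊠ ⋯ ⊠ F_{k_{l-1}}` applied to a simple tensor: apply the cyclically
rotated sequence of Taylor components (last block first) to the consecutive blocks. -/
def blockTensorRot (A B : Type) [AddCommGroup A] [Module ℂ A] [AddCommGroup B] [Module ℂ B]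
    (F : ∀ k : ℕ, TPow A k →ₗ[ℂ] B) {n : ℕ} (c : Composition (n + 1))
    (b : Fin (n + 1) → A) : TPow B c.length :=
  tprod ℂ (fun i : Fin c.length =>
    F (c.blocksFun (prevIdx i))
      (tprod ℂ (fun j : Fin (c.blocksFun (prevIdx i)) =>
        b ((((∑ t : Fin c.length, if (t : ℕ) < (i : ℕ) then c.blocksFun (prevIdx t) else 0)
              + (j : ℕ) : ℕ) : Fin (n + 1))))))

/-- `Fb` is the map `F_bar` induced on bar complexes by the Taylor components `F`. -/
def IsFbar (A B : Type) [AddCommGroup A] [Module ℂ A] [AddCommGroup B] [Module ℂ B]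
    (F : ∀ k : ℕ, TPow A k →ₗ[ℂ] B) (Fb : Chains A →ₗ[ℂ] Chains B) : Prop :=
  ∀ (k : ℕ) (a : Fin (k + 1) → A),
    Fb (inc A (k + 1) (tprod ℂ a)) =
      ∑ c : Composition (k + 1), inc B c.length (blockTensor A B F c a)

/-- `FH` is the map `F_Hoch` induced on Hochschild complexes by the Taylor components `F`. -/
def IsFhoch (A B : Type) [AddCommGroup A] [Module ℂ A] [AddCommGroup B] [Module ℂ B]
    (𝒜 : ℤ → Submodule ℂ A) (F : ∀ k : ℕ, TPow A k →ₗ[ℂ] B)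
    (FH : Chains A →ₗ[ℂ] Chains B) : Prop :=
  ∀ (k : ℕ) (d : Fin (k + 1) → ℤ) (a : Fin (k + 1) → A), (∀ i, a i ∈ 𝒜 (d i)) →
    FH (inc A (k + 1) (tprod ℂ a)) =
      ∑ c : Composition (k + 1),
        (inc B c.length (blockTensor A B F c a)
          + ∑ j ∈ Finset.Ico 1 (c.blocks.getLastD 1),
              tauSignPow j d • inc B c.length (blockTensorRot A B F c (rotIter j a)))

/-- `F_cycl = F_tsyg` : the map on the total spaces of Tsygan's double complexes which is
`F_Hoch` on the even columns and `F_bar` on the odd columns. -/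
def Fcyclic (A B : Type) [AddCommGroup A] [Module ℂ A] [AddCommGroup B] [Module ℂ B]
    (FH Fb : Chains A →ₗ[ℂ] Chains B) : CycChains A →ₗ[ℂ] CycChains B :=
  DirectSum.toModule ℂ ℕ (CycChains B) (fun m =>
    if Even m then cofm B m ∘ₗ FH else cofm B m ∘ₗ Fb)

end FLS


namespace FLS

/-! ### Auxiliary lemmas for the supertrace argument -/

section Aux

variable (M : Type) [AddCommGroup M] [Module ℂ M] [FiniteDimensional ℂ M]
  (𝒱 : ℤ → Submodule ℂ M) [DirectSum.Decomposition 𝒱]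

lemma gproj_mem (i : ℤ) (v : M) : gprojection M 𝒱 i v ∈ 𝒱 i := by
  simp only [gprojection, LinearMap.coe_comp, Function.comp_apply]
  exact Submodule.coe_mem _

lemma gproj_of_mem {i : ℤ} {v : M} (h : v ∈ 𝒱 i) : gprojection M 𝒱 i v = v := by
  simp only [gprojection, LinearMap.coe_comp, Function.comp_apply,
    DirectSum.decomposeLinearEquiv_apply, Submodule.coe_subtype, DirectSum.component]
  exact DirectSum.decompose_of_mem_same 𝒱 h

lemma gproj_of_mem_ne {i j : ℤ} (hij : j ≠ i) {v : M} (h : v ∈ 𝒱 j) :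
    gprojection M 𝒱 i v = 0 := by
  simp only [gprojection, LinearMap.coe_comp, Function.comp_apply,
    DirectSum.decomposeLinearEquiv_apply, Submodule.coe_subtype, DirectSum.component]
  exact DirectSum.decompose_of_mem_ne 𝒱 h hij

/-- The `i`-th term of the supertrace, as a linear functional. -/
def strT (i : ℤ) : Module.End ℂ M →ₗ[ℂ] ℂ where
  toFun f := ((-1 : ℂ) ^ i) *
    LinearMap.trace ℂ M (gprojection M 𝒱 i ∘ₗ f ∘ₗ gprojection M 𝒱 i)
  map_add' f g := by
    simp only [LinearMap.add_comp, LinearMap.comp_add, map_add, mul_add]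
  map_smul' c f := by
    simp only [LinearMap.smul_comp, LinearMap.comp_smul, map_smul, smul_eq_mul,
      RingHom.id_apply]
    ring

lemma str_eq_finsum_strT (f : Module.End ℂ M) :
    str M 𝒱 f = ∑ᶠ i : ℤ, strT M 𝒱 i f := rfl

lemma ne_bot_finite : {i : ℤ | 𝒱 i ≠ ⊥}.Finite :=
  Submodule.finite_ne_bot_of_iSupIndep
    (DirectSum.IsInternal.submodule_iSupIndep (DirectSum.Decomposition.isInternal 𝒱))

lemma gproj_eq_zero {i : ℤ} (h : 𝒱 i = ⊥) : gprojection M 𝒱 i = 0 := by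
  ext v
  have := gproj_mem M 𝒱 i v
  rw [h] at this
  simpa using this

lemma strT_support (f : Module.End ℂ M) :
    (Function.support fun i => strT M 𝒱 i f) ⊆ {i : ℤ | 𝒱 i ≠ ⊥} := by
  intro i hi
  simp only [Set.mem_setOf_eq]
  intro hbot
  apply hi
  show ((-1 : ℂ) ^ i) * _ = 0
  rw [gproj_eq_zero M 𝒱 hbot]
  simp

lemma strT_support_finite (f : Module.End ℂ M) :
    (Function.support fun i => strT M 𝒱 i f).Finite :=
  (ne_bot_finite M 𝒱).subset (strT_support M 𝒱 f)

/-- The supertrace as a linear functional. -/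
def strL : Module.End ℂ M →ₗ[ℂ] ℂ where
  toFun := str M 𝒱
  map_add' f g := by
    show str M 𝒱 (f + g) = str M 𝒱 f + str M 𝒱 g
    rw [str_eq_finsum_strT, str_eq_finsum_strT, str_eq_finsum_strT,
      ← finsum_add_distrib (strT_support_finite M 𝒱 f) (strT_support_finite M 𝒱 g)]
    simp [map_add]
  map_smul' c f := by
    show str M 𝒱 (c • f) = c * str M 𝒱 f
    rw [str_eq_finsum_strT, str_eq_finsum_strT]
    have h1 : ∀ i : ℤ, strT M 𝒱 i (c • f) = c * strT M 𝒱 i f := by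
      intro i; rw [map_smul]; rfl
    rw [finsum_congr h1, ← mul_finsum _ c]

/-- The supertrace cocycle, as a linear functional on the chain space. -/
def strChainL : Chains (Module.End ℂ M) →ₗ[ℂ] ℂ :=
  strL M 𝒱 ∘ₗ (PiTensorProduct.subsingletonEquiv (0 : Fin 1)).toLinearMap ∘ₗ
    (DirectSum.component ℂ ℕ (fun k => TPow (Module.End ℂ M) k) 1)

lemma strChainL_inc_ne {k : ℕ} (hk : k ≠ 1) (t : TPow (Module.End ℂ M) k) :
    strChainL M 𝒱 (inc (Module.End ℂ M) k t) = 0 := by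
  simp only [strChainL, LinearMap.coe_comp, Function.comp_apply, inc]
  rw [DirectSum.component.of]
  rw [dif_neg hk]
  simp

lemma strChainL_inc_one (a : Fin 1 → Module.End ℂ M) :
    strChainL M 𝒱 (inc (Module.End ℂ M) 1 (tprod ℂ a)) = str M 𝒱 (a 0) := by
  simp only [strChainL, LinearMap.coe_comp, Function.comp_apply, inc]
  rw [DirectSum.component.of, dif_pos rfl]
  simp only [LinearEquiv.coe_coe, PiTensorProduct.subsingletonEquiv_apply_tprod]
  rfl

lemma neg_one_zpow_eq_of_even_sub {m n : ℤ} (h : Even (m - n)) :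
    (-1 : ℂ) ^ m = (-1 : ℂ) ^ n := by
  obtain ⟨r, hr⟩ := h
  have hm : m = n + 2 * r := by linarith
  rw [hm, zpow_add₀ (by norm_num : (-1 : ℂ) ≠ 0), zpow_mul]
  norm_num

/-- Graded commutativity of the supertrace. -/
lemma str_mul_comm {da db : ℤ} (h : da + db = 0) {a b : Module.End ℂ M}
    (ha : a ∈ endGrade M 𝒱 da) (hb : b ∈ endGrade M 𝒱 db) :
    str M 𝒱 (a * b) = ((-1 : ℂ) ^ da) * str M 𝒱 (b * a) := by
  have key : ∀ i : ℤ, strT M 𝒱 i (a * b) = ((-1 : ℂ) ^ da) * strT M 𝒱 (i + db) (b * a) := by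
    intro i
    have step1 : gprojection M 𝒱 i ∘ₗ (a * b) ∘ₗ gprojection M 𝒱 i =
        (gprojection M 𝒱 i ∘ₗ a ∘ₗ gprojection M 𝒱 (i + db)) ∘ₗ
          (gprojection M 𝒱 (i + db) ∘ₗ b ∘ₗ gprojection M 𝒱 i) := by
      ext v
      have h2 : gprojection M 𝒱 (i + db) (b (gprojection M 𝒱 i v)) =
          b (gprojection M 𝒱 i v) := gproj_of_mem M 𝒱 (hb i _ (gproj_mem M 𝒱 i v))
      simp only [LinearMap.coe_comp, Function.comp_apply, Module.End.mul_apply, h2]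
    have step3 : (gprojection M 𝒱 (i + db) ∘ₗ b ∘ₗ gprojection M 𝒱 i) ∘ₗ
        (gprojection M 𝒱 i ∘ₗ a ∘ₗ gprojection M 𝒱 (i + db)) =
        gprojection M 𝒱 (i + db) ∘ₗ (b * a) ∘ₗ gprojection M 𝒱 (i + db) := by
      ext v
      have hmem : a (gprojection M 𝒱 (i + db) v) ∈ 𝒱 i := by
        have := ha (i + db) _ (gproj_mem M 𝒱 (i + db) v)
        rwa [show i + db + da = i by linarith] at this
      have e2 : gprojection M 𝒱 i (a (gprojection M 𝒱 (i + db) v)) =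
          a (gprojection M 𝒱 (i + db) v) := gproj_of_mem M 𝒱 hmem
      simp only [LinearMap.coe_comp, Function.comp_apply, Module.End.mul_apply, e2]
    have htr : LinearMap.trace ℂ M (gprojection M 𝒱 i ∘ₗ (a * b) ∘ₗ gprojection M 𝒱 i) =
        LinearMap.trace ℂ M
          (gprojection M 𝒱 (i + db) ∘ₗ (b * a) ∘ₗ gprojection M 𝒱 (i + db)) := by
      rw [step1, ← step3]
      exact LinearMap.trace_mul_comm ℂ _ _
    show ((-1 : ℂ) ^ i) * _ = ((-1 : ℂ) ^ da) * (((-1 : ℂ) ^ (i + db)) * _)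
    rw [htr, ← mul_assoc, ← zpow_add₀ (by norm_num : (-1 : ℂ) ≠ 0)]
    congr 2
    linarith
  rw [str_eq_finsum_strT, finsum_congr key]
  have hfin : (Function.support fun i : ℤ => strT M 𝒱 (i + db) (b * a)).Finite := by
    have : (Function.support fun i : ℤ => strT M 𝒱 (i + db) (b * a)) =
        (fun i : ℤ => i + db) ⁻¹' (Function.support fun j => strT M 𝒱 j (b * a)) := rfl
    rw [this]
    exact (strT_support_finite M 𝒱 (b * a)).preimage
      ((add_left_injective db).injOn)
  rw [← mul_finsum _ _]
  congr 1
  rw [str_eq_finsum_strT]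
  exact finsum_comp_equiv (Equiv.addRight db) (f := fun j : ℤ => strT M 𝒱 j (b * a))

lemma gproj_mem_endGrade (i : ℤ) : gprojection M 𝒱 i ∈ endGrade M 𝒱 0 := by
  intro j v hv
  rw [add_zero]
  rcases eq_or_ne j i with rfl | hne
  · rw [gproj_of_mem M 𝒱 hv]; exact hv
  · rw [gproj_of_mem_ne M 𝒱 hne hv]; exact (𝒱 j).zero_mem

lemma str_gproj (i : ℤ) :
    str M 𝒱 (gprojection M 𝒱 i) =
      ((-1 : ℂ) ^ i) * (Module.finrank ℂ (𝒱 i) : ℂ) := by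
  rw [str_eq_finsum_strT]
  rw [finsum_eq_single _ i (by
    intro j hj
    have h0 : gprojection M 𝒱 j ∘ₗ gprojection M 𝒱 i ∘ₗ gprojection M 𝒱 j =
        (0 : M →ₗ[ℂ] M) := by
      ext v
      have e1 : gprojection M 𝒱 i (gprojection M 𝒱 j v) = 0 :=
        gproj_of_mem_ne M 𝒱 hj (gproj_mem M 𝒱 j v)
      simp only [LinearMap.coe_comp, Function.comp_apply, e1, map_zero,
        LinearMap.zero_apply]
    show ((-1 : ℂ) ^ j) * _ = 0
    rw [h0]
    simp)]
  have hpp : gprojection M 𝒱 i ∘ₗ gprojection M 𝒱 i ∘ₗ gprojection M 𝒱 i =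
      gprojection M 𝒱 i := by
    ext v
    have e1 : gprojection M 𝒱 i (gprojection M 𝒱 i v) = gprojection M 𝒱 i v :=
      gproj_of_mem M 𝒱 (gproj_mem M 𝒱 i v)
    simp only [LinearMap.coe_comp, Function.comp_apply, e1]
  show ((-1 : ℂ) ^ i) * _ = _
  rw [hpp]
  congr 1
  have hproj : LinearMap.IsProj (𝒱 i) (gprojection M 𝒱 i) :=
    ⟨fun v => gproj_mem M 𝒱 i v, fun v hv => gproj_of_mem M 𝒱 hv⟩
  rw [hproj.trace]

lemma exists_grade_ne_bot [Nontrivial M] : ∃ i : ℤ, 𝒱 i ≠ ⊥ := by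
  by_contra hbot
  push_neg at hbot
  have htop := DirectSum.IsInternal.submodule_iSup_eq_top
    (DirectSum.Decomposition.isInternal 𝒱)
  have h2 : iSup 𝒱 = ⊥ := iSup_eq_bot.mpr hbot
  have h3 : (⊥ : Submodule ℂ M) = ⊤ := by rw [← h2]; exact htop
  exact absurd h3 bot_ne_top

lemma strChainL_inc_add_two (k : ℕ) (t : TPow (Module.End ℂ M) (k + 2)) :
    strChainL M 𝒱 (inc (Module.End ℂ M) (k + 2) t) = 0 :=
  strChainL_inc_ne M 𝒱 (by omega) t

lemma strChainL_inc_two (t : TPow (Module.End ℂ M) 2) :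
    strChainL M 𝒱 (inc (Module.End ℂ M) 2 t) = 0 :=
  strChainL_inc_ne M 𝒱 (by omega) t

lemma tprod_zero_one : tprod ℂ (fun _ : Fin 1 => (0 : Module.End ℂ M)) = 0 :=
  MultilinearMap.map_coord_zero _ (0 : Fin 1) rfl

lemma psum_one (d : Fin 2 → ℤ) : psum d 1 = d 0 := by
  simp [psum, Fin.sum_univ_two]

lemma strChainL_D_vanishes
    (D : Chains (Module.End ℂ M) →ₗ[ℂ] Chains (Module.End ℂ M))
    (hD : IsHochschildDifferential (Module.End ℂ M) (endGrade M 𝒱) 0 D) :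
    ∀ y ∈ chainsDeg (Module.End ℂ M) (endGrade M 𝒱) (0 - 1 : ℤ),
      strChainL M 𝒱 (D y) = 0 := by
  have hker : chainsDeg (Module.End ℂ M) (endGrade M 𝒱) (0 - 1 : ℤ) ≤
      LinearMap.ker (strChainL M 𝒱 ∘ₗ D) := by
    rw [chainsDeg, Submodule.span_le]
    rintro z ⟨k, d, a, hmem, hsum, rfl⟩
    simp only [SetLike.mem_coe, LinearMap.mem_ker, LinearMap.comp_apply]
    match k with
    | 0 =>
      have ha : a = fun _ => a 0 := funext fun i => congrArg a (Fin.eq_zero i)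
      rw [show (tprod ℂ a : TPow (Module.End ℂ M) 1) =
        tprod ℂ (fun _ => a 0) from by rw [← ha]]
      rw [hD.1 (a 0)]
      simp only [LinearMap.zero_apply, tprod_zero_one, map_zero]
    | 1 =>
      rw [hD.2 0 d a hmem]
      have hsum2 : d 0 + d 1 = 0 := by
        have := hsum
        rw [Fin.sum_univ_two] at this
        push_cast at this
        linarith
      have hd1 : d 1 = -d 0 := by linarith
      simp only [map_add, map_smul, Fin.sum_univ_one, Fin.sum_univ_two,
        smul_eq_mul, Nat.reduceAdd, Fin.isValue, Fin.val_zero, Nat.cast_zero,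
        strChainL_inc_two, mul_zero, add_zero]
      rw [strChainL_inc_one, strChainL_inc_one]
      have hv1 : mulAt a 0 (0 : Fin 1) = a 0 * a 1 := rfl
      have hv2 : cycMul a (0 : Fin 1) = a 1 * a 0 := rfl
      rw [hv1, hv2]
      have hms : str M 𝒱 (a 1 * a 0) = ((-1 : ℂ) ^ (d 1)) * str M 𝒱 (a 0 * a 1) :=
        str_mul_comm M 𝒱 (by linarith : d 1 + d 0 = 0) (hmem 1) (hmem 0)
      have hfinal : (-1 : ℂ) ^ (psum d 1 + 1)
          + (-1 : ℂ) ^ ((d (Fin.last 1) + 1) * psum d 1) * (-1 : ℂ) ^ (d 1) = 0 := by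
        rw [show (Fin.last 1 : Fin 2) = 1 from rfl, psum_one]
        have he1 : (-1 : ℂ) ^ (d 0 + 1) = -((-1 : ℂ) ^ (d 0)) := by
          rw [zpow_add₀ (by norm_num : (-1 : ℂ) ≠ 0)]
          simp
        have he2 : (-1 : ℂ) ^ ((d 1 + 1) * d 0) * (-1 : ℂ) ^ (d 1)
            = (-1 : ℂ) ^ (d 0) := by
          rw [← zpow_add₀ (by norm_num : (-1 : ℂ) ≠ 0)]
          apply neg_one_zpow_eq_of_even_sub
          have hexp : (d 1 + 1) * d 0 + d 1 - d 0 = -(d 0 * (d 0 + 1)) := by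
            rw [hd1]; ring
          rw [hexp]
          exact (Int.even_mul_succ_self (d 0)).neg
        rw [he1, he2]
        ring
      rw [hms]
      generalize (-1 : ℂ) ^ (psum d 1 + 1) = c1 at hfinal ⊢
      generalize (-1 : ℂ) ^ ((d (Fin.last 1) + 1) * psum d 1) = c2 at hfinal ⊢
      generalize (-1 : ℂ) ^ (d 1) = c3 at hfinal ⊢
      generalize str M 𝒱 (a 0 * a 1) = S
      linear_combination S * hfinal
    | (k' + 2) =>
      rw [hD.2 (k' + 1) d a hmem]
      simp only [map_add, map_smul, map_sum, strChainL_inc_add_two, smul_zero,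
        mul_zero, add_zero, Finset.sum_const_zero, zero_add]
  intro y hy
  exact hker hy

lemma strChainL_pure_vanishes {k : ℕ} (hk : k ≠ 1) (n : ℤ)
    {x : Chains (Module.End ℂ M)}
    (hx : x ∈ pureChains (Module.End ℂ M) (endGrade M 𝒱) k n) :
    strChainL M 𝒱 x = 0 := by
  have hker : pureChains (Module.End ℂ M) (endGrade M 𝒱) k n ≤
      LinearMap.ker (strChainL M 𝒱) := by
    rw [pureChains, Submodule.span_le]
    rintro z ⟨d, a, hmem, hsum, rfl⟩
    simp only [SetLike.mem_coe, LinearMap.mem_ker]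
    exact strChainL_inc_ne M 𝒱 hk _
  exact hker hx

end Aux

/-- Let `V` be a nonzero finite-dimensional `ℤ`-graded complex vector space
with zero differential.  The isomorphism `HH_0(End V) ≅ ℂ` realized by the supertrace sends the
class of every Hochschild `0`-cycle lying in `End(V)^{⊗k}` (tensor length `k`, total degree
`k - 1`) to `0`, for every `k ≥ 2`. -/
theorem supertrace_iso_vanishes_on_longer_cycles
    (M : Type) [AddCommGroup M] [Module ℂ M] [FiniteDimensional ℂ M] [Nontrivial M]
    (𝒱 : ℤ → Submodule ℂ M) [DirectSum.Decomposition 𝒱]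
    (D : Chains (Module.End ℂ M) →ₗ[ℂ] Chains (Module.End ℂ M))
    (hD : IsHochschildDifferential (Module.End ℂ M) (endGrade M 𝒱) 0 D)
    (e : HH (Module.End ℂ M) (endGrade M 𝒱) D 0 ≃ₗ[ℂ] ℂ) (he : IsStrIso M 𝒱 D e)
    (k : ℕ) (hk : 2 ≤ k) (x : Chains (Module.End ℂ M))
    (hx : x ∈ pureChains (Module.End ℂ M) (endGrade M 𝒱) k ((k : ℤ) - 1))
    (hz : x ∈ cocycles (Module.End ℂ M) (endGrade M 𝒱) D 0) :
    e (hhClass (Module.End ℂ M) (endGrade M 𝒱) D 0 x hz) = 0 := by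
  classical
  obtain ⟨i₀, hi₀⟩ := exists_grade_ne_bot M 𝒱
  set f₀ : Module.End ℂ M := gprojection M 𝒱 i₀ with hf₀def
  have hf₀g : f₀ ∈ endGrade M 𝒱 0 := gproj_mem_endGrade M 𝒱 i₀
  set s : ℂ := str M 𝒱 f₀ with hsdef
  have hs : s ≠ 0 := by
    rw [hsdef, hf₀def, str_gproj]
    apply mul_ne_zero
    · exact zpow_ne_zero _ (by norm_num)
    · rw [Nat.cast_ne_zero]
      intro h0
      exact hi₀ (Submodule.finrank_eq_zero.mp h0)
  set w : Chains (Module.End ℂ M) :=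
    inc (Module.End ℂ M) 1 (tprod ℂ (fun _ : Fin 1 => f₀)) with hwdef
  have hw : w ∈ cocycles (Module.End ℂ M) (endGrade M 𝒱) D 0 := by
    constructor
    · show D w = 0
      rw [hwdef, hD.1 f₀]
      simp only [LinearMap.zero_apply, tprod_zero_one, map_zero]
    · exact Submodule.subset_span
        ⟨0, fun _ => 0, fun _ => f₀, fun _ => hf₀g, by simp, rfl⟩
  have hew : e (hhClass (Module.End ℂ M) (endGrade M 𝒱) D 0 w hw) = s :=
    he f₀ hf₀g hw
  set c : ℂ := e (hhClass (Module.End ℂ M) (endGrade M 𝒱) D 0 x hz) with hcdef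
  show c = 0
  have hkey : hhClass (Module.End ℂ M) (endGrade M 𝒱) D 0 x hz =
      (c / s) • hhClass (Module.End ℂ M) (endGrade M 𝒱) D 0 w hw := by
    apply e.injective
    rw [LinearEquiv.map_smul, hew, smul_eq_mul, div_mul_cancel₀ _ hs, ← hcdef]
  have hval : (cobound (Module.End ℂ M) (endGrade M 𝒱) D 0).mkQ x =
      (c / s) • (cobound (Module.End ℂ M) (endGrade M 𝒱) D 0).mkQ w :=
    congrArg Subtype.val hkey
  have hmemb : x - (c / s) • w ∈ cobound (Module.End ℂ M) (endGrade M 𝒱) D 0 := by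
    have hq : (cobound (Module.End ℂ M) (endGrade M 𝒱) D 0).mkQ (x - (c / s) • w) = 0 := by
      rw [map_sub, map_smul, hval, sub_self]
    rw [Submodule.mkQ_apply] at hq
    exact (Submodule.Quotient.mk_eq_zero _).mp hq
  obtain ⟨y, hy, hDy⟩ := hmemb
  have h1 : strChainL M 𝒱 (x - (c / s) • w) = 0 := by
    rw [← hDy]
    exact strChainL_D_vanishes M 𝒱 D hD y hy
  have h2 : strChainL M 𝒱 x = 0 :=
    strChainL_pure_vanishes M 𝒱 (by omega) _ hx
  have h3 : strChainL M 𝒱 w = s := by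
    rw [hwdef, strChainL_inc_one]
  rw [map_sub, map_smul, h2, h3, smul_eq_mul, div_mul_cancel₀ _ hs, zero_sub,
    neg_eq_zero] at h1
  exact h1

end FLS
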